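/- arXiv:1411.5668 — 7 statements merged into one kernel-verified Lean document; each statement's English description precedes it below -/
import Mathlib

section
/- For a 1-field P on a finite set E ⊂ ℝ^d, define A(P;a,b) = |P_a(a) - P_b(a) + P_a(b) - P_b(b)|/|a-b|² and B(P;a,b) = |∇P_a - ∇P_b|/|a-b|. Then Γ¹(P;E) := 2 sup_{x∈ℝ^d} max_{a≠b} |P_a(x) - P_b(x)|/(|a-x|² + |b-x|²) equals max_{a≠b} (√(A(P;a,b)² + B(P;a,b)²) + A(P;a,b)). -/
open RealInnerProductSpace

/-!
Write `Q = P_a(a) - P_b(a) + P_a(b) - P_b(b)`, `v = ∇P_a - ∇P_b` and `y = (x - a) + (x - b)`.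
Then `2 (P_a(x) - P_b(x)) = Q + ⟪v, y⟫` and, by the parallelogram law,
`2 (|a - x|² + |b - x|²) = |y|² + |a - b|²`, so for a fixed pair the quotient in `Γ¹` is
`|Q + ⟪v, y⟫| / (|y|² + |a - b|²)` with `y` ranging over the whole space. After rescaling,
the supremum of this is that of `(A + B s) / (1 + s²)` over `s`, namely the larger root
`K = (√(A² + B²) + A) / 2` of `K² - A K - B² / 4 = 0`. It is attained because the quadratic
`K (1 + s²) - (A + B s)` has a double root, at `s = B / (2K)`.
-/

theorem add_mul_div_one_add_sq_le (A B s : ℝ) :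
    (A + B * s) / (1 + s ^ 2) ≤ (√(A ^ 2 + B ^ 2) + A) / 2 := by
  set S := √(A ^ 2 + B ^ 2)
  have hS : S ^ 2 = A ^ 2 + B ^ 2 := Real.sq_sqrt (by positivity)
  have hS0 : 0 ≤ S := Real.sqrt_nonneg _
  have hSA : 0 ≤ S + A := by
    have : |A| ≤ S := Real.abs_le_sqrt (by nlinarith)
    linarith [neg_abs_le A]
  have key : (S + A) * ((S + A) * (1 + s ^ 2) - 2 * (A + B * s)) = ((S + A) * s - B) ^ 2 := by
    linear_combination hS
  rw [div_le_iff₀ (by positivity)]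
  rcases hSA.eq_or_lt with hSA | hSA
  · have hB : B = 0 := by nlinarith
    rw [hB, ← hSA]
    linarith
  · have := (mul_nonneg_iff_of_pos_left hSA).1 (key ▸ sq_nonneg _)
    linarith

theorem add_mul_div_one_add_sq_eq {A : ℝ} (hA : 0 ≤ A) {B s : ℝ}
    (hs : s = B / (√(A ^ 2 + B ^ 2) + A)) :
    (A + B * s) / (1 + s ^ 2) = (√(A ^ 2 + B ^ 2) + A) / 2 := by
  set S := √(A ^ 2 + B ^ 2)
  have hS : S ^ 2 = A ^ 2 + B ^ 2 := Real.sq_sqrt (by positivity)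
  rcases (add_nonneg (Real.sqrt_nonneg _) hA : 0 ≤ S + A).eq_or_lt with hSA | hSA
  · have hB : B = 0 := by nlinarith
    have hA0 : A = 0 := by linarith [Real.sqrt_nonneg (A ^ 2 + B ^ 2)]
    rw [show S = 0 by linarith, hA0, hB]
    simp
  · have hBs : B = (S + A) * s := by rw [hs, mul_div_cancel₀ _ hSA.ne']
    clear_value S
    rw [hBs] at hS ⊢
    rw [div_eq_iff (by positivity)]
    refine mul_left_cancel₀ hSA.ne' ?_
    linear_combination (-1 / 2) * hS

section InnerProductSpace

variable {V : Type*} [NormedAddCommGroup V] [InnerProductSpace ℝ V]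

theorem isGreatest_range_abs_add_inner_div (c : ℝ) (v : V) {ρ : ℝ} (hρ : ρ ≠ 0) :
    IsGreatest (Set.range fun y : V => |c + ⟪v, y⟫| / (‖y‖ ^ 2 + ρ ^ 2))
      ((√((|c| / ρ ^ 2) ^ 2 + (‖v‖ / ρ) ^ 2) + |c| / ρ ^ 2) / 2) := by
  set A := |c| / ρ ^ 2
  set B := ‖v‖ / ρ
  have rescale (t : ℝ) :
      (|c| + ‖v‖ * t) / (t ^ 2 + ρ ^ 2) = (A + B * (t / ρ)) / (1 + (t / ρ) ^ 2) := by
    simp only [A, B]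
    field_simp
    ring
  constructor
  · obtain ⟨σ, hσ, hσc⟩ : ∃ σ : ℝ, |σ| = 1 ∧ σ * |c| = c := by
      rcases abs_choice c with h | h
      · exact ⟨1, abs_one, by rw [h, one_mul]⟩
      · exact ⟨-1, by simp, by rw [h]; ring⟩
    have hSA : 0 ≤ √(A ^ 2 + B ^ 2) + A := by positivity
    set y := (σ / (√(A ^ 2 + B ^ 2) + A)) • v
    have hy : ‖y‖ = ‖v‖ / (√(A ^ 2 + B ^ 2) + A) := by
      rw [norm_smul, norm_div, Real.norm_eq_abs, Real.norm_eq_abs, hσ, abs_of_nonneg hSA]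
      ring
    have halign : |c + ⟪v, y⟫| = |c| + ‖v‖ * ‖y‖ := by
      rw [real_inner_smul_right, real_inner_self_eq_norm_sq, hy,
        show c + σ / (√(A ^ 2 + B ^ 2) + A) * ‖v‖ ^ 2
          = σ * (|c| + ‖v‖ * (‖v‖ / (√(A ^ 2 + B ^ 2) + A))) by linear_combination -hσc,
        abs_mul, hσ, one_mul, abs_of_nonneg (by positivity)]
    refine ⟨y, ?_⟩
    dsimp only
    rw [halign, rescale, add_mul_div_one_add_sq_eq (by positivity) (by rw [hy, div_right_comm])]
  · rintro _ ⟨y, rfl⟩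
    calc |c + ⟪v, y⟫| / (‖y‖ ^ 2 + ρ ^ 2)
        ≤ (|c| + ‖v‖ * ‖y‖) / (‖y‖ ^ 2 + ρ ^ 2) := by
          gcongr
          exact (abs_add_le _ _).trans (add_le_add le_rfl (abs_real_inner_le_norm v y))
      _ = (A + B * (‖y‖ / ρ)) / (1 + (‖y‖ / ρ) ^ 2) := rescale _
      _ ≤ _ := add_mul_div_one_add_sq_le _ _ _

theorem sub_eq_half_add_inner {f : V → ℝ} {D : V → V} {P : V → V → ℝ}
    (hP : ∀ a x, P a x = f a + ⟪D a, x - a⟫) (a b x : V) :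
    P a x - P b x = (P a a - P b a + P a b - P b b + ⟪D a - D b, (x - a) + (x - b)⟫) / 2 := by
  simp only [hP, sub_self, inner_zero_right, inner_sub_left, inner_add_right, inner_sub_right]
  ring

theorem norm_sub_sq_add_norm_sub_sq (a b x : V) :
    ‖a - x‖ ^ 2 + ‖b - x‖ ^ 2 = (‖(x - a) + (x - b)‖ ^ 2 + ‖a - b‖ ^ 2) / 2 := by
  have h := parallelogram_law_with_norm ℝ (x - a) (x - b)
  rw [sub_sub_sub_cancel_left, norm_sub_rev b a] at h
  rw [norm_sub_rev a x, norm_sub_rev b x]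
  linarith

theorem isGreatest_range_abs_sub_div {f : V → ℝ} {D : V → V} {P : V → V → ℝ}
    (hP : ∀ a x, P a x = f a + ⟪D a, x - a⟫) {a b : V} (hab : a ≠ b) :
    IsGreatest (Set.range fun x => |P a x - P b x| / (‖a - x‖ ^ 2 + ‖b - x‖ ^ 2))
      ((√((|P a a - P b a + P a b - P b b| / ‖a - b‖ ^ 2) ^ 2 + (‖D a - D b‖ / ‖a - b‖) ^ 2)
        + |P a a - P b a + P a b - P b b| / ‖a - b‖ ^ 2) / 2) := by
  have hsurj : Function.Surjective fun x : V => (x - a) + (x - b) :=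
    fun y => ⟨(2 : ℝ)⁻¹ • (y + a + b), by module⟩
  have hcomp : (fun x => |P a x - P b x| / (‖a - x‖ ^ 2 + ‖b - x‖ ^ 2))
      = (fun y => |P a a - P b a + P a b - P b b + ⟪D a - D b, y⟫| / (‖y‖ ^ 2 + ‖a - b‖ ^ 2))
        ∘ fun x => (x - a) + (x - b) := by
    funext x
    rw [Function.comp_apply, sub_eq_half_add_inner hP, norm_sub_sq_add_norm_sub_sq, abs_div,
      abs_two, div_div_div_cancel_right₀ two_ne_zero]
  rw [hcomp, hsurj.range_comp]
  exact isGreatest_range_abs_add_inner_div _ _ (norm_ne_zero_iff.2 (sub_ne_zero.2 hab))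

end InnerProductSpace

theorem ciSup_csSup_eq_of_forall_le_of_mem {ι α : Type*} [ConditionallyCompleteLattice α]
    {S : ι → Set α} {M : α} (hne : ∀ i, (S i).Nonempty) (hle : ∀ i, ∀ y ∈ S i, y ≤ M)
    (hM : ∃ i, M ∈ S i) : ⨆ i, sSup (S i) = M := by
  obtain ⟨i₀, hi₀⟩ := hM
  have hsSup_le (i : ι) : sSup (S i) ≤ M := csSup_le (hne i) (hle i)
  have : Nonempty ι := ⟨i₀⟩
  refine le_antisymm (ciSup_le hsSup_le) ?_
  calc M ≤ sSup (S i₀) := le_csSup ⟨M, hle i₀⟩ hi₀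
    _ ≤ ⨆ i, sSup (S i) := le_ciSup ⟨M, by rintro _ ⟨i, rfl⟩; exact hsSup_le i⟩ i₀

/-- Le Gruyer's functional `Γ¹(P;E)`: the sup formulation equals the closed form
`max_{a≠b} (√(A² + B²) + A)`. -/
theorem gamma1_sup_eq_closed_form {d : ℕ}
    (E : Finset (EuclideanSpace ℝ (Fin d))) (hE : 2 ≤ E.card)
    (f : EuclideanSpace ℝ (Fin d) → ℝ)
    (D : EuclideanSpace ℝ (Fin d) → EuclideanSpace ℝ (Fin d))
    (P : EuclideanSpace ℝ (Fin d) → EuclideanSpace ℝ (Fin d) → ℝ)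
    (hP : ∀ a x, P a x = f a + ⟪D a, x - a⟫) :
    2 * ⨆ x : EuclideanSpace ℝ (Fin d),
        sSup {r : ℝ | ∃ a ∈ E, ∃ b ∈ E, a ≠ b ∧
          r = |P a x - P b x| / (‖a - x‖ ^ 2 + ‖b - x‖ ^ 2)}
      = sSup {r : ℝ | ∃ a ∈ E, ∃ b ∈ E, a ≠ b ∧
          r = Real.sqrt ((|P a a - P b a + P a b - P b b| / ‖a - b‖ ^ 2) ^ 2
                + (‖D a - D b‖ / ‖a - b‖) ^ 2)
              + |P a a - P b a + P a b - P b b| / ‖a - b‖ ^ 2} := by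
  set Γ := fun a b => Real.sqrt ((|P a a - P b a + P a b - P b b| / ‖a - b‖ ^ 2) ^ 2
    + (‖D a - D b‖ / ‖a - b‖) ^ 2) + |P a a - P b a + P a b - P b b| / ‖a - b‖ ^ 2
  set T := {r : ℝ | ∃ a ∈ E, ∃ b ∈ E, a ≠ b ∧ r = Γ a b}
  obtain ⟨a₀, ha₀, b₀, hb₀, hab₀⟩ := Finset.one_lt_card.mp hE
  have hT : T.Finite := (E.finite_toSet.image2 Γ E.finite_toSet).subset <| by
    rintro r ⟨a, ha, b, hb, -, rfl⟩
    exact ⟨a, ha, b, hb, rfl⟩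
  have hTne : T.Nonempty := ⟨_, a₀, ha₀, b₀, hb₀, hab₀, rfl⟩
  have hpair {a b} (hab : a ≠ b) := isGreatest_range_abs_sub_div hP hab
  rw [ciSup_csSup_eq_of_forall_le_of_mem (M := sSup T / 2)]
  · ring
  · exact fun x => ⟨_, a₀, ha₀, b₀, hb₀, hab₀, rfl⟩
  · rintro x _ ⟨a, ha, b, hb, hab, rfl⟩
    exact ((hpair hab).2 ⟨x, rfl⟩).trans
      (div_le_div_of_nonneg_right (le_csSup hT.bddAbove ⟨a, ha, b, hb, hab, rfl⟩) two_pos.le)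
  · obtain ⟨a, ha, b, hb, hab, hmax⟩ := hTne.csSup_mem hT
    obtain ⟨x, hx⟩ := (hpair hab).1
    exact ⟨x, a, ha, b, hb, hab, by rw [hmax]; exact hx.symm⟩
end

section
/- For any 1-field P on a finite set E ⊂ ℝ^d with at least two points, the value M = Γ¹(P;E) satisfies the Wells condition: for all a, b ∈ E, f_b ≤ f_a + ½(D_a f + D_b f)·(b - a) + (M/4)|b - a|² - (1/(4M))|D_a f - D_b f|², provided M > 0. -/
open RealInnerProductSpace

/-- `M = Γ¹(P;E)` satisfies the Wells condition. -/
theorem gamma1_satisfies_wells_condition {d : ℕ}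
    (E : Finset (EuclideanSpace ℝ (Fin d))) (hE : 2 ≤ E.card)
    (f : EuclideanSpace ℝ (Fin d) → ℝ)
    (D : EuclideanSpace ℝ (Fin d) → EuclideanSpace ℝ (Fin d))
    (P : EuclideanSpace ℝ (Fin d) → EuclideanSpace ℝ (Fin d) → ℝ)
    (hP : ∀ a x, P a x = f a + ⟪D a, x - a⟫)
    (M : ℝ)
    (hM : M = sSup {r : ℝ | ∃ a ∈ E, ∃ b ∈ E, a ≠ b ∧
        r = Real.sqrt ((|P a a - P b a + P a b - P b b| / ‖a - b‖ ^ 2) ^ 2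
              + (‖D a - D b‖ / ‖a - b‖) ^ 2)
            + |P a a - P b a + P a b - P b b| / ‖a - b‖ ^ 2})
    (hMpos : 0 < M) :
    ∀ a ∈ E, ∀ b ∈ E,
      f b ≤ f a + (1 / 2) * ⟪D a + D b, b - a⟫ + (M / 4) * ‖b - a‖ ^ 2
            - (1 / (4 * M)) * ‖D a - D b‖ ^ 2 := by
  intro a ha b hb
  by_cases hab : a = b
  · subst hab
    simp [sub_self]
  -- the set
  set S : Set ℝ := {r : ℝ | ∃ a ∈ E, ∃ b ∈ E, a ≠ b ∧
        r = Real.sqrt ((|P a a - P b a + P a b - P b b| / ‖a - b‖ ^ 2) ^ 2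
              + (‖D a - D b‖ / ‖a - b‖) ^ 2)
            + |P a a - P b a + P a b - P b b| / ‖a - b‖ ^ 2} with hS
  have hSbdd : BddAbove S := by
    have hsub : S ⊆ (fun p : (EuclideanSpace ℝ (Fin d)) × (EuclideanSpace ℝ (Fin d)) =>
        Real.sqrt ((|P p.1 p.1 - P p.2 p.1 + P p.1 p.2 - P p.2 p.2| / ‖p.1 - p.2‖ ^ 2) ^ 2
              + (‖D p.1 - D p.2‖ / ‖p.1 - p.2‖) ^ 2)
            + |P p.1 p.1 - P p.2 p.1 + P p.1 p.2 - P p.2 p.2| / ‖p.1 - p.2‖ ^ 2) ''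
        ((E : Set _) ×ˢ (E : Set _)) := by
      rintro r ⟨x, hx, y, hy, hxy, rfl⟩
      exact ⟨(x, y), ⟨hx, hy⟩, rfl⟩
    exact (((E.finite_toSet.prod E.finite_toSet).image _).subset hsub).bddAbove
  set n := ‖a - b‖ with hn
  have hnpos : 0 < n := by
    rw [hn, norm_pos_iff]
    exact sub_ne_zero_of_ne hab
  set Q := P a a - P b a + P a b - P b b with hQ
  set A := |Q| / n ^ 2 with hA
  set B := ‖D a - D b‖ / n with hB
  have hmem : Real.sqrt (A ^ 2 + B ^ 2) + A ∈ S :=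
    ⟨a, ha, b, hb, hab, rfl⟩
  have hle : Real.sqrt (A ^ 2 + B ^ 2) + A ≤ M := by
    rw [hM]; exact le_csSup hSbdd hmem
  have hs0 : 0 ≤ Real.sqrt (A ^ 2 + B ^ 2) := Real.sqrt_nonneg _
  have hs2 : Real.sqrt (A ^ 2 + B ^ 2) ^ 2 = A ^ 2 + B ^ 2 :=
    Real.sq_sqrt (by positivity)
  have key : 2 * A * M ≤ M ^ 2 - B ^ 2 := by nlinarith
  have hAQ : A * n ^ 2 = |Q| := by
    rw [hA]; field_simp
  have hBD : B ^ 2 * n ^ 2 = ‖D a - D b‖ ^ 2 := by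
    rw [hB]; field_simp
  have hQval : Q = 2 * (f a - f b) + ⟪D a + D b, b - a⟫ := by
    rw [hQ, hP, hP, hP, hP]
    have h1 : a - b = -(b - a) := by abel
    rw [h1, inner_neg_right, inner_add_left]
    simp only [sub_self, inner_zero_right]
    ring
  have hnorm : ‖b - a‖ = n := by rw [hn, norm_sub_rev]
  have hkey2 : (2 * A * M) * n ^ 2 ≤ (M ^ 2 - B ^ 2) * n ^ 2 :=
    mul_le_mul_of_nonneg_right key (by positivity)
  have hQin : ⟪D a + D b, b - a⟫ = Q - 2 * (f a - f b) := by
    rw [hQval]; ring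
  rw [hnorm, hQin]
  have habs : -Q ≤ |Q| := neg_le_abs Q
  have hexp : 2 * |Q| * M ≤ M ^ 2 * n ^ 2 - ‖D a - D b‖ ^ 2 := by nlinarith
  have hM0 : M ≠ 0 := ne_of_gt hMpos
  rw [← sub_nonneg]
  have hiden : f a + 1 / 2 * (Q - 2 * (f a - f b)) + M / 4 * n ^ 2
      - 1 / (4 * M) * ‖D a - D b‖ ^ 2 - f b
      = (M ^ 2 * n ^ 2 - ‖D a - D b‖ ^ 2 - (-Q) * (2 * M)) / (4 * M) := by
    field_simp
    ring
  rw [hiden]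
  apply div_nonneg _ (by positivity)
  nlinarith [hexp, habs, hMpos]
end

section
/- Let F: ℝ^d → ℝ be differentiable with Lip(∇F) = sup_{x≠y} |∇F(x) - ∇F(y)|/|x - y| ≤ M. Then for any a, b ∈ ℝ^d, |F(a) - F(b) - ½(∇F(a) + ∇F(b))·(a - b)| ≤ (M/4)|a - b|². -/
/-!
Restricting `F` to the segment `t ↦ b + t • (a - b)` reduces the estimate to a function
`f : ℝ → G` on `[0, 1]` whose derivative is `c`-Lipschitz with `c = M ‖a - b‖²`. For such `f`
the symmetric difference `u t = f (1/2 + t) - f (1/2 - t) - t • (f' 0 + f' 1)` vanishes at `0`,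
equals the error term at `t = 1/2`, and has derivative
`(f' (1/2 + t) - f' 1) + (f' (1/2 - t) - f' 0)` of norm at most `c (1 - 2t)`; the mean value
inequality against the barrier `c (t - t²)` gives the bound `c / 4`.
-/

open RealInnerProductSpace Set

section

variable {E G : Type*} [NormedAddCommGroup E] [NormedSpace ℝ E]
  [NormedAddCommGroup G] [NormedSpace ℝ G]

theorem norm_sub_sub_midpoint_le_of_lipschitz_deriv {f f' : ℝ → G} {c : ℝ}
    (hf : ∀ t, HasDerivAt f (f' t) t) (hf' : ∀ s t, ‖f' s - f' t‖ ≤ c * |s - t|) :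
    ‖f 1 - f 0 - (1 / 2 : ℝ) • (f' 0 + f' 1)‖ ≤ c / 4 := by
  set u : ℝ → G := fun t => f (1 / 2 + t) - f (1 / 2 - t) - t • (f' 0 + f' 1)
  have hu : ∀ t, HasDerivAt u (f' (1 / 2 + t) + f' (1 / 2 - t) - (f' 0 + f' 1)) t := by
    intro t
    have hplus := (hf (1 / 2 + t)).comp_const_add (1 / 2) t
    have hminus := (hf (1 / 2 - t)).comp_const_sub (1 / 2) t
    exact ((hplus.sub hminus).sub ((hasDerivAt_id t).smul_const (f' 0 + f' 1))).congr_deriv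
      (by rw [sub_neg_eq_add, one_smul])
  have hB : ∀ t : ℝ, HasDerivAt (fun t => c * (t - t ^ 2)) (c * (1 - 2 * t)) t := by
    intro t
    simpa using ((hasDerivAt_id t).sub (hasDerivAt_pow 2 t)).const_mul c
  have bound : ∀ t ∈ Ico (0 : ℝ) (1 / 2),
      ‖f' (1 / 2 + t) + f' (1 / 2 - t) - (f' 0 + f' 1)‖ ≤ c * (1 - 2 * t) := by
    rintro t ⟨-, ht⟩
    have hsplit : f' (1 / 2 + t) + f' (1 / 2 - t) - (f' 0 + f' 1)
        = (f' (1 / 2 + t) - f' 1) + (f' (1 / 2 - t) - f' 0) := by abel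
    calc ‖f' (1 / 2 + t) + f' (1 / 2 - t) - (f' 0 + f' 1)‖
        ≤ c * |1 / 2 + t - 1| + c * |1 / 2 - t - 0| := by
          rw [hsplit]
          exact (norm_add_le _ _).trans (add_le_add (hf' _ _) (hf' _ _))
      _ = c * (1 - 2 * t) := by
          rw [abs_of_neg (by linarith), abs_of_pos (by linarith)]
          ring
  have key := image_norm_le_of_norm_deriv_right_le_deriv_boundary
    (fun t _ => (hu t).continuousAt.continuousWithinAt) (fun t _ => (hu t).hasDerivWithinAt)
    (by simp [u]) hB bound (right_mem_Icc.2 (by norm_num : (0 : ℝ) ≤ 1 / 2))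
  have hu_half : u (1 / 2) = f 1 - f 0 - (1 / 2 : ℝ) • (f' 0 + f' 1) := by norm_num [u]
  rw [← hu_half]
  exact key.trans_eq (by ring)

theorem norm_sub_sub_midpoint_le_of_lipschitz_fderiv {F : E → G} {F' : E → E →L[ℝ] G} {M : ℝ}
    (hF : ∀ x, HasFDerivAt F (F' x) x) (hF' : ∀ x y, ‖F' x - F' y‖ ≤ M * ‖x - y‖) (a b : E) :
    ‖F a - F b - (1 / 2 : ℝ) • (F' a + F' b) (a - b)‖ ≤ M / 4 * ‖a - b‖ ^ 2 := by
  set v := a - b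
  have hγ : ∀ t : ℝ, HasDerivAt (fun t : ℝ => b + t • v) v t := fun t => by
    simpa using ((hasDerivAt_id t).smul_const v).const_add b
  have hlip : ∀ s t : ℝ,
      ‖F' (b + s • v) v - F' (b + t • v) v‖ ≤ M * ‖v‖ ^ 2 * |s - t| := by
    intro s t
    calc ‖F' (b + s • v) v - F' (b + t • v) v‖
        = ‖(F' (b + s • v) - F' (b + t • v)) v‖ := rfl
      _ ≤ ‖F' (b + s • v) - F' (b + t • v)‖ * ‖v‖ := ContinuousLinearMap.le_opNorm _ _
      _ ≤ M * ‖(b + s • v) - (b + t • v)‖ * ‖v‖ := by gcongr; exact hF' _ _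
      _ = M * ‖v‖ ^ 2 * |s - t| := by
          rw [add_sub_add_left_eq_sub, ← sub_smul, norm_smul, Real.norm_eq_abs]
          ring
  have := norm_sub_sub_midpoint_le_of_lipschitz_deriv
    (fun t => (hF _).comp_hasDerivAt t (hγ t)) hlip
  have hend : b + v = a := add_sub_cancel b a
  simpa only [Function.comp_apply, zero_smul, add_zero, one_smul, hend, add_comm (F' b v),
    add_apply, mul_div_right_comm] using this

end

/-- Taylor-type estimate for functions with `M`-Lipschitz gradient. -/
theorem c11_taylor_midpoint_estimate {d : ℕ}
    (F : EuclideanSpace ℝ (Fin d) → ℝ) (M : ℝ)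
    (hdiff : Differentiable ℝ F)
    (hlip : ∀ x y, ‖gradient F x - gradient F y‖ ≤ M * ‖x - y‖) :
    ∀ a b, |F a - F b - (1 / 2) * ⟪gradient F a + gradient F b, a - b⟫|
      ≤ (M / 4) * ‖a - b‖ ^ 2 := by
  intro a b
  let D x := InnerProductSpace.toDual ℝ (EuclideanSpace ℝ (Fin d)) (gradient F x)
  have hD : ∀ x y, ‖D x - D y‖ ≤ M * ‖x - y‖ := fun x y => by
    simpa only [D, ← map_sub, LinearIsometryEquiv.norm_map] using hlip x y
  have := norm_sub_sub_midpoint_le_of_lipschitz_fderiv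
    (fun x => (hdiff x).hasGradientAt.hasFDerivAt) hD a b
  simpa [D, inner_add_left] using this
end

section
/- Given a finite set E = {a_1,…,a_N} ⊂ ℝ^d and fixed values f: E → ℝ, the function g: ℝ^{dN} → ℝ defined by g(Y) = Γ¹(P_Y; E), where Y = (y_1,…,y_N) and P_{Y,a_k}(x) = f(a_k) + y_k·(x - a_k), is convex in Y. -/
open RealInnerProductSpace

/-! Writing `ν(Y) = 2 (f j - f k) - ⟪a j - a k, Y j + Y k⟫` for the numerator of `A`, the pair term
`√(A² + B²) + A` is `φ(ν(Y) / ‖a j - a k‖², (Y j - Y k) / ‖a j - a k‖)` with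
`φ(s, w) = √(s² + ‖w‖²) + |s|`, i.e. the Euclidean norm on `ℝ × E` plus `|s|`. So each pair term
is a convex function composed with an affine map of `Y`, and `Γ¹` is a finite supremum of them. -/

/-- Over an empty index type `⨆` is the junk value `0` of `ℝ`, which is convex as well. -/
theorem convexOn_ciSup {ι E : Type*} [AddCommMonoid E] [SMul ℝ E] {s : Set E}
    {F : ι → E → ℝ} (hs : Convex ℝ s) (hF : ∀ i, ConvexOn ℝ s (F i))
    (hbdd : ∀ x ∈ s, BddAbove (Set.range fun i => F i x)) :
    ConvexOn ℝ s fun x => ⨆ i, F i x := by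
  rcases isEmpty_or_nonempty ι with _ | _
  · simpa only [Real.iSup_of_isEmpty] using convexOn_const 0 hs
  refine ⟨hs, fun x hx y hy a b ha hb hab => ciSup_le fun i => ?_⟩
  calc F i (a • x + b • y) ≤ a * F i x + b * F i y := (hF i).2 hx hy ha hb hab
    _ ≤ a * (⨆ i, F i x) + b * ⨆ i, F i y :=
      add_le_add (mul_le_mul_of_nonneg_left (le_ciSup (hbdd x hx) i) ha)
        (mul_le_mul_of_nonneg_left (le_ciSup (hbdd y hy) i) hb)

section NormedSpace

variable {E : Type*} [NormedAddCommGroup E] [NormedSpace ℝ E]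

theorem convexOn_sqrt_sq_add_norm_sq :
    ConvexOn ℝ Set.univ fun q : ℝ × E => √(q.1 ^ 2 + ‖q.2‖ ^ 2) := by
  have := convexOn_univ_norm.comp_linearMap (WithLp.linearEquiv 2 ℝ (ℝ × E)).symm.toLinearMap
  simpa [Function.comp_def, WithLp.prod_norm_eq_of_L2] using this

theorem convexOn_sqrt_sq_add_norm_sq_add_abs :
    ConvexOn ℝ Set.univ fun q : ℝ × E => √(q.1 ^ 2 + ‖q.2‖ ^ 2) + |q.1| :=
  convexOn_sqrt_sq_add_norm_sq.add <| by
    simpa [Function.comp_def] using convexOn_univ_norm.comp_linearMap (LinearMap.fst ℝ ℝ E)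

theorem convexOn_sqrt_div_sq_add_norm_div_sq_add_abs_div {V : Type*} [AddCommGroup V]
    [Module ℝ V] (α : V →ᵃ[ℝ] ℝ) (L : V →ᵃ[ℝ] E) {r : ℝ} (hr : 0 ≤ r) (s : ℝ) :
    ConvexOn ℝ Set.univ fun x => √((|α x| / r) ^ 2 + (‖L x‖ / s) ^ 2) + |α x| / r := by
  have := convexOn_sqrt_sq_add_norm_sq_add_abs.comp_affineMap ((r⁻¹ • α).prod (s⁻¹ • L))
  rw [Set.preimage_univ] at this
  refine this.congr fun x _ => ?_
  simp [norm_smul, abs_mul, abs_of_nonneg hr, div_eq_inv_mul, mul_pow]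

end NormedSpace

section InnerProductSpace

variable {ι E : Type*} [NormedAddCommGroup E] [InnerProductSpace ℝ E]

/-- `√(A² + B²) + A` for the pair `(a j, a k)` and the jets `x ↦ f i + ⟪Y i, x - a i⟫`. -/
noncomputable def gamma1Pair (f : ι → ℝ) (a Y : ι → E) (j k : ι) : ℝ :=
  Real.sqrt
      ((|f j - (f k + ⟪Y k, a j - a k⟫) + (f j + ⟪Y j, a k - a j⟫) - f k| / ‖a j - a k‖ ^ 2) ^ 2
        + (‖Y j - Y k‖ / ‖a j - a k‖) ^ 2)
    + |f j - (f k + ⟪Y k, a j - a k⟫) + (f j + ⟪Y j, a k - a j⟫) - f k| / ‖a j - a k‖ ^ 2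

theorem convexOn_gamma1Pair (f : ι → ℝ) (a : ι → E) (j k : ι) :
    ConvexOn ℝ Set.univ fun Y => gamma1Pair f a Y j k := by
  let ν : (ι → E) →ᵃ[ℝ] ℝ := AffineMap.const ℝ _ (2 * (f j - f k))
    - (innerₛₗ ℝ (a j - a k) ∘ₗ
        (LinearMap.proj (R := ℝ) (φ := fun _ : ι => E) j + LinearMap.proj k)).toAffineMap
  let δ : (ι → E) →ᵃ[ℝ] E :=
    (LinearMap.proj (R := ℝ) (φ := fun _ : ι => E) j - LinearMap.proj k).toAffineMap
  have hν : ∀ Y, ν Y = f j - (f k + ⟪Y k, a j - a k⟫) + (f j + ⟪Y j, a k - a j⟫) - f k := by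
    intro Y
    change 2 * (f j - f k) - ⟪a j - a k, Y j + Y k⟫ = _
    simp only [inner_sub_left, inner_sub_right, inner_add_right, real_inner_comm (a j),
      real_inner_comm (a k)]
    ring
  refine (convexOn_sqrt_div_sq_add_norm_div_sq_add_abs_div ν δ (sq_nonneg ‖a j - a k‖)
    ‖a j - a k‖).congr fun Y _ => ?_
  simp [gamma1Pair, hν, δ]

end InnerProductSpace

theorem gamma1_convex_in_gradients_general {d N : ℕ}
    (a : Fin N → EuclideanSpace ℝ (Fin d))
    (f : Fin N → ℝ) :
    ConvexOn ℝ Set.univ (fun Y : Fin N → EuclideanSpace ℝ (Fin d) =>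
      sSup {r : ℝ | ∃ j k : Fin N, j ≠ k ∧
        r = Real.sqrt
              ((|f j - (f k + ⟪Y k, a j - a k⟫) + (f j + ⟪Y j, a k - a j⟫) - f k|
                  / ‖a j - a k‖ ^ 2) ^ 2
                + (‖Y j - Y k‖ / ‖a j - a k‖) ^ 2)
            + |f j - (f k + ⟪Y k, a j - a k⟫) + (f j + ⟪Y j, a k - a j⟫) - f k|
                / ‖a j - a k‖ ^ 2}) := by
  have hset : ∀ Y : Fin N → EuclideanSpace ℝ (Fin d),
      {r : ℝ | ∃ j k : Fin N, j ≠ k ∧ r = gamma1Pair f a Y j k}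
        = Set.range fun p : {p : Fin N × Fin N // p.1 ≠ p.2} => gamma1Pair f a Y p.1.1 p.1.2 := by
    intro Y
    ext r
    simp [eq_comm]
  change ConvexOn ℝ Set.univ fun Y =>
    sSup {r : ℝ | ∃ j k : Fin N, j ≠ k ∧ r = gamma1Pair f a Y j k}
  simp_rw [hset]
  exact convexOn_ciSup convex_univ (fun p => convexOn_gamma1Pair f a p.1.1 p.1.2)
    fun Y _ => (Set.finite_range _).bddAbove

/-- The functional `g(Y) = Γ¹(P_Y; E)` is convex in the gradients `Y`. -/
theorem gamma1_convex_in_gradients {d N : ℕ} (hN : 2 ≤ N)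
    (a : Fin N → EuclideanSpace ℝ (Fin d)) (ha : Function.Injective a)
    (f : Fin N → ℝ) :
    ConvexOn ℝ Set.univ (fun Y : Fin N → EuclideanSpace ℝ (Fin d) =>
      sSup {r : ℝ | ∃ j k : Fin N, j ≠ k ∧
        r = Real.sqrt
              ((|f j - (f k + ⟪Y k, a j - a k⟫) + (f j + ⟪Y j, a k - a j⟫) - f k|
                  / ‖a j - a k‖ ^ 2) ^ 2
                + (‖Y j - Y k‖ / ‖a j - a k‖) ^ 2)
            + |f j - (f k + ⟪Y k, a j - a k⟫) + (f j + ⟪Y j, a k - a j⟫) - f k|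
                / ‖a j - a k‖ ^ 2}) :=
  gamma1_convex_in_gradients_general a f
end

section
/- Let h: ℝ → ℝ be the function h(x) = -log(-q(x)) where q: ℝ^n → ℝ is a convex quadratic function and we restrict to a line where q < 0; then t ↦ -log(-q(x + tv)) is self-concordant, i.e., satisfies |h'''(t)| ≤ 2 h''(t)^{3/2} wherever defined. -/
/-!
Along the line, `p t = q (x + t • v)` is a quadratic polynomial with `p'' = c := 2 ⟪v, Q v⟫ ≥ 0`.
With `u = p' / (-p)` and `k = c / (-p)` one finds `u' = u² + k` and `k' = k u`, so the log-barrier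
`h = -log (-p)` has `h' = u`, `h'' = u² + k` and `h''' = 2 u³ + 3 k u`. Where `p < 0` we have
`k ≥ 0`, and then `4 (u² + k)³ - (2 u³ + 3 k u)² = 3 k² u² + 4 k³ ≥ 0`.
-/

open RealInnerProductSpace Filter Topology

def SelfConcordantAt (h : ℝ → ℝ) (t : ℝ) : Prop :=
  |deriv (deriv (deriv h)) t| ≤ 2 * deriv (deriv h) t ^ ((3 : ℝ) / 2)

lemma abs_le_two_mul_rpow_three_halves {y G : ℝ} (hG : 0 ≤ G) (hy : y ^ 2 ≤ 4 * G ^ 3) :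
    |y| ≤ 2 * G ^ ((3 : ℝ) / 2) := by
  refine abs_le_of_sq_le_sq ?_ (by positivity)
  have hpow : (G ^ ((3 : ℝ) / 2)) ^ 2 = G ^ 3 := by
    rw [← Real.rpow_natCast _ 2, ← Real.rpow_mul hG, ← Real.rpow_natCast G 3]
    norm_num
  rw [mul_pow, hpow]
  linarith

lemma abs_two_mul_pow_three_add_le {u k : ℝ} (hk : 0 ≤ k) :
    |2 * u ^ 3 + 3 * k * u| ≤ 2 * (u ^ 2 + k) ^ ((3 : ℝ) / 2) := by
  refine abs_le_two_mul_rpow_three_halves (by positivity) ?_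
  have hgap : 4 * (u ^ 2 + k) ^ 3 - (2 * u ^ 3 + 3 * k * u) ^ 2 = 3 * (k * u) ^ 2 + 4 * k ^ 3 := by
    ring
  linarith [sq_nonneg (k * u), pow_nonneg hk 3]

section LogBarrier

variable {p p' : ℝ → ℝ} {c t : ℝ}

lemma hasDerivAt_neg_log_neg (hp : HasDerivAt p (p' t) t) (ht : p t ≠ 0) :
    HasDerivAt (fun s ↦ -Real.log (-p s)) (p' t / -p t) t := by
  refine (hp.fun_neg.log (neg_ne_zero.mpr ht)).fun_neg.congr_deriv ?_
  rw [neg_div, neg_neg]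

lemma hasDerivAt_div_neg (hp : HasDerivAt p (p' t) t) (hp' : HasDerivAt p' c t) (ht : p t ≠ 0) :
    HasDerivAt (fun s ↦ p' s / -p s) ((p' t / -p t) ^ 2 + c / -p t) t := by
  refine (hp'.fun_div hp.fun_neg (neg_ne_zero.mpr ht)).congr_deriv ?_
  field_simp
  ring

lemma hasDerivAt_const_div_neg (hp : HasDerivAt p (p' t) t) (ht : p t ≠ 0) :
    HasDerivAt (fun s ↦ c / -p s) (c / -p t * (p' t / -p t)) t := by
  refine ((hasDerivAt_const t c).fun_div hp.fun_neg (neg_ne_zero.mpr ht)).congr_deriv ?_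
  field_simp
  ring

variable (hp : ∀ s, HasDerivAt p (p' s) s) (hp' : ∀ s, HasDerivAt p' c s)
include hp

lemma deriv_neg_log_neg_eventuallyEq (ht : p t ≠ 0) :
    deriv (fun s ↦ -Real.log (-p s)) =ᶠ[𝓝 t] fun s ↦ p' s / -p s :=
  ((hp t).continuousAt.eventually_ne ht).mono fun s hs ↦ (hasDerivAt_neg_log_neg (hp s) hs).deriv

include hp'

lemma deriv_deriv_neg_log_neg_eventuallyEq (ht : p t ≠ 0) :
    deriv (deriv fun s ↦ -Real.log (-p s)) =ᶠ[𝓝 t] fun s ↦ (p' s / -p s) ^ 2 + c / -p s := by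
  filter_upwards [((hp t).continuousAt.eventually_ne ht).eventually_nhds] with s hs
  rw [(deriv_neg_log_neg_eventuallyEq hp hs.self_of_nhds).deriv_eq]
  exact (hasDerivAt_div_neg (hp s) (hp' s) hs.self_of_nhds).deriv

lemma deriv_deriv_deriv_neg_log_neg (ht : p t ≠ 0) :
    deriv (deriv (deriv fun s ↦ -Real.log (-p s))) t =
      2 * (p' t / -p t) ^ 3 + 3 * (c / -p t) * (p' t / -p t) := by
  rw [(deriv_deriv_neg_log_neg_eventuallyEq hp hp' ht).deriv_eq,
    (((hasDerivAt_div_neg (hp t) (hp' t) ht).fun_pow 2).fun_add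
    (hasDerivAt_const_div_neg (hp t) ht)).deriv]
  ring

theorem selfConcordantAt_neg_log_neg (hc : 0 ≤ c) (ht : p t < 0) :
    SelfConcordantAt (fun s ↦ -Real.log (-p s)) t := by
  unfold SelfConcordantAt
  rw [deriv_deriv_deriv_neg_log_neg hp hp' ht.ne,
    (deriv_deriv_neg_log_neg_eventuallyEq hp hp' ht.ne).eq_of_nhds]
  exact abs_two_mul_pow_three_add_le (div_nonneg hc (neg_nonneg.mpr ht.le))

end LogBarrier

lemma hasDerivAt_quadratic (a β γ t : ℝ) :
    HasDerivAt (fun s ↦ a * s ^ 2 + β * s + γ) (2 * a * t + β) t := by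
  refine (((hasDerivAt_pow 2 t).const_mul a).fun_add ((hasDerivAt_id t).const_mul β)).add_const γ
    |>.congr_deriv ?_
  norm_num
  ring

lemma hasDerivAt_linear (a β t : ℝ) : HasDerivAt (fun s ↦ a * s + β) a t := by
  simpa using ((hasDerivAt_id t).const_mul a).add_const β

lemma inner_map_add_smul_eq {E : Type*} [NormedAddCommGroup E] [InnerProductSpace ℝ E]
    (Q : E →L[ℝ] E) (b x v : E) (c t : ℝ) :
    ⟪x + t • v, Q (x + t • v)⟫ + ⟪b, x + t • v⟫ + c =
      ⟪v, Q v⟫ * t ^ 2 + (⟪x, Q v⟫ + ⟪v, Q x⟫ + ⟪b, v⟫) * t + (⟪x, Q x⟫ + ⟪b, x⟫ + c) := by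
  simp only [map_add, map_smul, inner_add_left, inner_add_right, real_inner_smul_left,
    real_inner_smul_right]
  ring

theorem log_barrier_quadratic_self_concordant_general {n : ℕ}
    (Q : EuclideanSpace ℝ (Fin n) →L[ℝ] EuclideanSpace ℝ (Fin n))
    (hpsd : ∀ u, 0 ≤ ⟪u, Q u⟫)
    (b : EuclideanSpace ℝ (Fin n)) (c : ℝ)
    (q : EuclideanSpace ℝ (Fin n) → ℝ)
    (hq : ∀ u, q u = ⟪u, Q u⟫ + ⟪b, u⟫ + c)
    (x v : EuclideanSpace ℝ (Fin n))
    (h : ℝ → ℝ)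
    (hh : ∀ t, h t = -Real.log (-(q (x + t • v)))) :
    ∀ t : ℝ, q (x + t • v) < 0 →
      |deriv (deriv (deriv h)) t| ≤ 2 * (deriv (deriv h) t) ^ ((3 : ℝ) / 2) := by
  intro t ht
  set a := ⟪v, Q v⟫
  set β := ⟪x, Q v⟫ + ⟪v, Q x⟫ + ⟪b, v⟫
  set γ := ⟪x, Q x⟫ + ⟪b, x⟫ + c
  have hline (s : ℝ) : q (x + s • v) = a * s ^ 2 + β * s + γ := by
    rw [hq, inner_map_add_smul_eq]
  rw [show h = fun s ↦ -Real.log (-(a * s ^ 2 + β * s + γ)) from funext fun s ↦ by rw [hh, hline]]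
  exact selfConcordantAt_neg_log_neg (p' := fun s ↦ 2 * a * s + β) (hasDerivAt_quadratic a β γ)
    (hasDerivAt_linear (2 * a) β) (mul_nonneg zero_le_two (hpsd v)) (by rwa [← hline])

/-- The log-barrier of a convex quadratic constraint is self-concordant along any line. -/
theorem log_barrier_quadratic_self_concordant {n : ℕ}
    (Q : EuclideanSpace ℝ (Fin n) →L[ℝ] EuclideanSpace ℝ (Fin n))
    (hsym : ∀ u v, ⟪Q u, v⟫ = ⟪u, Q v⟫)
    (hpsd : ∀ u, 0 ≤ ⟪u, Q u⟫)
    (b : EuclideanSpace ℝ (Fin n)) (c : ℝ)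
    (q : EuclideanSpace ℝ (Fin n) → ℝ)
    (hq : ∀ u, q u = ⟪u, Q u⟫ + ⟪b, u⟫ + c)
    (x v : EuclideanSpace ℝ (Fin n))
    (h : ℝ → ℝ)
    (hh : ∀ t, h t = -Real.log (-(q (x + t • v)))) :
    ∀ t : ℝ, q (x + t • v) < 0 →
      |deriv (deriv (deriv h)) t| ≤ 2 * (deriv (deriv h) t) ^ ((3 : ℝ) / 2) :=
  log_barrier_quadratic_self_concordant_general Q hpsd b c q hq x v h hh
end

section
/- Let E ⊂ ℝ^d be finite and (𝒯, 𝒲) an ε-WSPD of E with 0 < ε < 1. For any pair (a,b) ∈ E × E with a ≠ b, letting (Λ₁, Λ₂) ∈ 𝒲 be the unique pair with (a,b) ∈ ∪Λ₁ × ∪Λ₂, and letting a_S, a_{Λ₁}, a_{Λ₂}, a_T be representatives as in the WSPD-based estimate with S ∈ Λ₁ containing a and T ∈ Λ₂ containing b, one has |D_a f - D_b f| ≤ (1 + 6ε)·Γ̃¹(P;𝒯,𝒲)·|a - b|, where Γ̃¹(P;𝒯,𝒲) is the maximum of B(P;·,·) over the representative pairs together with the analogous Ā terms. -/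
/-- WSPD-based estimate for the gradient differences:
`|D_a f - D_b f| ≤ (1 + 6ε) Γ̃¹(P;𝒯,𝒲) |a - b|` via the chain of representatives. -/
theorem wspd_gradient_estimate {d : ℕ}
    (L1 L2 : Set (EuclideanSpace ℝ (Fin d))) (ε : ℝ) (hε0 : 0 < ε) (hε1 : ε < 1)
    (hL1b : Bornology.IsBounded L1) (hL2b : Bornology.IsBounded L2)
    (hL1ne : L1.Nonempty) (hL2ne : L2.Nonempty)
    (hsep : max (Metric.diam L1) (Metric.diam L2)
      < ε * sInf {r : ℝ | ∃ x ∈ L1, ∃ y ∈ L2, r = dist x y})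
    (a aS aL1 : EuclideanSpace ℝ (Fin d)) (ha : a ∈ L1) (haS : aS ∈ L1) (haL1 : aL1 ∈ L1)
    (b aT aL2 : EuclideanSpace ℝ (Fin d)) (hb : b ∈ L2) (haT : aT ∈ L2) (haL2 : aL2 ∈ L2)
    (D : EuclideanSpace ℝ (Fin d) → EuclideanSpace ℝ (Fin d))
    (G : ℝ) (hG : 0 ≤ G)
    (h1 : ‖D aL1 - D aL2‖ ≤ G * ‖aL1 - aL2‖)
    (h2 : ‖D aS - D aL1‖ ≤ G * ‖aS - aL1‖)
    (h3 : ‖D aT - D aL2‖ ≤ G * ‖aT - aL2‖)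
    (h4 : ‖D a - D aS‖ ≤ G * ‖a - aS‖)
    (h5 : ‖D b - D aT‖ ≤ G * ‖b - aT‖) :
    ‖D a - D b‖ ≤ (1 + 6 * ε) * G * ‖a - b‖ := by
  set R : Set ℝ := {r : ℝ | ∃ x ∈ L1, ∃ y ∈ L2, r = dist x y} with hR
  have hmem : dist a b ∈ R := ⟨a, ha, b, hb, rfl⟩
  have hbdd : BddBelow R := ⟨0, fun r hr => by
    obtain ⟨x, _, y, _, rfl⟩ := hr; exact dist_nonneg⟩
  have hδab : sInf R ≤ ‖a - b‖ := by
    simpa [dist_eq_norm] using csInf_le hbdd hmem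
  have hδ0 : 0 ≤ sInf R := le_csInf ⟨_, hmem⟩ (fun r hr => by
    obtain ⟨x, _, y, _, rfl⟩ := hr; exact dist_nonneg)
  have hd1 : Metric.diam L1 ≤ ε * sInf R :=
    le_of_lt (lt_of_le_of_lt (le_max_left _ _) hsep)
  have hd2 : Metric.diam L2 ≤ ε * sInf R :=
    le_of_lt (lt_of_le_of_lt (le_max_right _ _) hsep)
  have key : ∀ x ∈ L1, ∀ y ∈ L1, ‖x - y‖ ≤ ε * ‖a - b‖ := fun x hx y hy => by
    have := Metric.dist_le_diam_of_mem hL1b hx hy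
    rw [dist_eq_norm] at this
    calc ‖x - y‖ ≤ ε * sInf R := this.trans hd1
      _ ≤ ε * ‖a - b‖ := by nlinarith
  have key2 : ∀ x ∈ L2, ∀ y ∈ L2, ‖x - y‖ ≤ ε * ‖a - b‖ := fun x hx y hy => by
    have := Metric.dist_le_diam_of_mem hL2b hx hy
    rw [dist_eq_norm] at this
    calc ‖x - y‖ ≤ ε * sInf R := this.trans hd2
      _ ≤ ε * ‖a - b‖ := by nlinarith
  have kaS := key a ha aS haS
  have kSL1 := key aS haS aL1 haL1
  have kL1a := key aL1 haL1 a ha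
  have kbT := key2 b hb aT haT
  have kTL2 := key2 aT haT aL2 haL2
  have kL2b := key2 aL2 haL2 b hb
  have hL12 : ‖aL1 - aL2‖ ≤ (1 + 2 * ε) * ‖a - b‖ := by
    calc ‖aL1 - aL2‖ = ‖(aL1 - a) + (a - b) + (b - aL2)‖ := by abel_nf
      _ ≤ ‖aL1 - a‖ + ‖a - b‖ + ‖b - aL2‖ := norm_add₃_le
      _ ≤ ε * ‖a - b‖ + ‖a - b‖ + ε * ‖a - b‖ := by
          have h := key2 b hb aL2 haL2
          linarith [kL1a, h]
      _ = (1 + 2 * ε) * ‖a - b‖ := by ring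
  have chain : ‖D a - D b‖ ≤ ‖D a - D aS‖ + ‖D aS - D aL1‖ + ‖D aL1 - D aL2‖
      + ‖D aT - D aL2‖ + ‖D b - D aT‖ := by
    calc ‖D a - D b‖
        = ‖(D a - D aS) + (D aS - D aL1) + (D aL1 - D aL2) + (-(D aT - D aL2)) + (-(D b - D aT))‖ := by
          abel_nf
      _ ≤ ‖(D a - D aS) + (D aS - D aL1) + (D aL1 - D aL2) + (-(D aT - D aL2))‖ + ‖-(D b - D aT)‖ :=
          norm_add_le _ _
      _ ≤ ‖(D a - D aS) + (D aS - D aL1) + (D aL1 - D aL2)‖ + ‖-(D aT - D aL2)‖ + ‖-(D b - D aT)‖ := by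
          gcongr; exact norm_add_le _ _
      _ ≤ ‖D a - D aS‖ + ‖D aS - D aL1‖ + ‖D aL1 - D aL2‖ + ‖D aT - D aL2‖ + ‖D b - D aT‖ := by
          rw [norm_neg, norm_neg]; gcongr <;> exact norm_add₃_le
  have hab0 : (0:ℝ) ≤ ‖a - b‖ := norm_nonneg _
  calc ‖D a - D b‖
      ≤ ‖D a - D aS‖ + ‖D aS - D aL1‖ + ‖D aL1 - D aL2‖ + ‖D aT - D aL2‖ + ‖D b - D aT‖ := chain
    _ ≤ G * ‖a - aS‖ + G * ‖aS - aL1‖ + G * ‖aL1 - aL2‖ + G * ‖aT - aL2‖ + G * ‖b - aT‖ := by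
        linarith
    _ ≤ G * (ε * ‖a - b‖) + G * (ε * ‖a - b‖) + G * ((1 + 2 * ε) * ‖a - b‖)
        + G * (ε * ‖a - b‖) + G * (ε * ‖a - b‖) := by gcongr
    _ = (1 + 6 * ε) * G * ‖a - b‖ := by ring
end

section
/- Let S ⊂ E with the affine spaces S_H (affine hull of the shifted points S̃ = {ã : a ∈ S}) and S_E = {x : d_a(x) = d_b(x) for all a,b ∈ S}. If x ∈ ℝ^d, y ∈ Ŝ (convex hull of S̃), z ∈ S_E with x = ½(y + z), and S_C = S_H ∩ S_E is a single point with S_H ⊥ S_E, then dist(x, S_H) = ½|z - S_C| and dist(x, S_E) = ½|y - S_C|. -/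
/-!
Since `y ∈ S_H` and `z ∈ S_E`, the vector `z - S_C` lies in `S_E.direction = S_H.directionᗮ`, and
`y - S_C` in `S_H.direction = S_E.directionᗮ`. So `x = midpoint y z` is the point
`midpoint y S_C ∈ S_H` moved by `½ (z - S_C)`, orthogonally to `S_H`: that point is the foot of the
perpendicular from `x` to `S_H`. Symmetrically, `midpoint z S_C` is the foot on `S_E`.
-/

open Metric

section

variable {E : Type*} [NormedAddCommGroup E] [InnerProductSpace ℝ E]

theorem AffineSubspace.infDist_vadd_eq_norm {s : AffineSubspace ℝ E}
    [s.direction.HasOrthogonalProjection] {p : E} (hp : p ∈ s) {v : E} (hv : v ∈ s.directionᗮ) :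
    infDist (v +ᵥ p) (s : Set E) = ‖v‖ := by
  have : Nonempty s := ⟨⟨p, hp⟩⟩
  rw [← EuclideanGeometry.dist_orthogonalProjection_eq_infDist,
    EuclideanGeometry.orthogonalProjection_vadd_eq_self hp hv, dist_vadd_left]

theorem AffineSubspace.infDist_midpoint_eq_half_norm {s : AffineSubspace ℝ E}
    [s.direction.HasOrthogonalProjection] {c y z : E} (hc : c ∈ s) (hy : y ∈ s)
    (hz : z - c ∈ s.directionᗮ) :
    infDist (midpoint ℝ y z) (s : Set E) = ‖z - c‖ / 2 := by
  have hmid : midpoint ℝ y c ∈ s := AffineMap.lineMap_mem _ hy hc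
  have hshift : midpoint ℝ y z = (2 : ℝ)⁻¹ • (z - c) +ᵥ midpoint ℝ y c := by
    simp only [midpoint_eq_smul_add, invOf_eq_inv, vadd_eq_add]
    module
  rw [hshift, infDist_vadd_eq_norm hmid (Submodule.smul_mem _ _ hz), norm_smul, norm_inv,
    Real.norm_ofNat, inv_mul_eq_div]

end

/-- Distances from `x = ½(y+z)` to the orthogonal complementary affine subspaces
`S_H` and `S_E` through `S_C`. -/
theorem dist_to_orthogonal_affine_subspaces {d : ℕ}
    (SH SE : AffineSubspace ℝ (EuclideanSpace ℝ (Fin d)))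
    (Stil : Set (EuclideanSpace ℝ (Fin d)))
    (hspan : SH = affineSpan ℝ Stil)
    (SC x y z : EuclideanSpace ℝ (Fin d))
    (hSCH : SC ∈ SH) (hSCE : SC ∈ SE)
    (hdir : SE.direction = (SH.direction)ᗮ)
    (hy : y ∈ convexHull ℝ Stil) (hz : z ∈ SE)
    (hx : x = (2 : ℝ)⁻¹ • (y + z)) :
    Metric.infDist x (SH : Set (EuclideanSpace ℝ (Fin d))) = ‖z - SC‖ / 2 ∧
    Metric.infDist x (SE : Set (EuclideanSpace ℝ (Fin d))) = ‖y - SC‖ / 2 := by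
  have hyH : y ∈ SH := hspan ▸ convexHull_subset_affineSpan Stil hy
  have hzH : z - SC ∈ SH.directionᗮ := hdir ▸ AffineSubspace.vsub_mem_direction hz hSCE
  have hyE : y - SC ∈ SE.directionᗮ := by
    rw [hdir, Submodule.orthogonal_orthogonal]
    exact AffineSubspace.vsub_mem_direction hyH hSCH
  rw [hx, ← invOf_eq_inv (2 : ℝ), ← midpoint_eq_smul_add]
  refine ⟨AffineSubspace.infDist_midpoint_eq_half_norm hSCH hyH hzH, ?_⟩
  rw [midpoint_comm]
  exact AffineSubspace.infDist_midpoint_eq_half_norm hSCE hz hyE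
end
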